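/- Let a ∈ C(ℝᵈ) be bounded with compact support, let ψ = F̄(a) ∈ L²(ℝᵈ) be its inverse Fourier transform, and let b ∈ C₀(ℝᵈ). Define A u = ψ ⋆ u (convolution) for u ∈ L∞ with compact support, and B u = b·u. Then the commutator C = A∘B − B∘A is given by (Cu)(x) = ∫_{ℝᵈ}(b(y) − b(x))ψ(x−y)u(y)dy, and C is a compact operator from L∞-functions supported in a fixed compact set K into L^{p₀}(V) for every relatively compact V ⊂ ℝᵈ and every p₀ ≥ 1. -/

import Mathlib

/-!
The commutator is the integral operator with kernel `κ x y = (b y - b x) * ψ (x - y)`, which is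
jointly continuous because `ψ`, the inverse Fourier transform of an integrable function, is
continuous. For fixed `x`, `κ x` is integrable on `K`, so weak-* convergence `uₙ ⇀ 0` gives
`(C uₙ) x → 0` pointwise; `κ` is bounded on the compact set `closure V ×ˢ K`, so the `C uₙ` are
uniformly bounded on `V`, and dominated convergence on the finite-measure set `V` concludes.
-/

open MeasureTheory Filter Function Set Topology
open scoped ENNReal FourierTransform

theorem continuous_fourierInv_of_integrable {V : Type*} [NormedAddCommGroup V]
    [InnerProductSpace ℝ V] [FiniteDimensional ℝ V] [MeasurableSpace V] [BorelSpace V]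
    {f : V → ℂ} (hf : Integrable f) : Continuous (𝓕⁻ f) := by
  rw [← Real.Lp.fourierTransformInv_toLp (memLp_one_iff_integrable.2 hf)]
  exact BoundedContinuousFunction.continuous _

section MeasureSpace

variable {α : Type*} [MeasurableSpace α] {μ : Measure α}

theorem integral_mul_sub_mul_integral {k b u : α → ℂ} (c : ℂ)
    (hbu : Integrable (fun y => k y * (b y * u y)) μ) (hu : Integrable (fun y => k y * u y) μ) :
    ∫ y, k y * (b y * u y) ∂μ - c * ∫ y, k y * u y ∂μ = ∫ y, (b y - c) * k y * u y ∂μ := by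
  rw [← integral_const_mul, ← integral_sub hbu (hu.const_mul c)]
  congr 1
  ext y
  ring

theorem norm_integral_mul_le_of_support_subset {k u : α → ℂ} {K : Set α} {C M : ℝ}
    (hK : μ K < ∞) (hsupp : support u ⊆ K) (hk : ∀ y ∈ K, ‖k y‖ ≤ C) (hu : ∀ y, ‖u y‖ ≤ M) :
    ‖∫ y, k y * u y ∂μ‖ ≤ C * M * μ.real K := by
  rw [← setIntegral_eq_integral_of_forall_compl_eq_zero fun y hy => by
    rw [notMem_support.mp (mt (hsupp ·) hy), mul_zero]]
  exact norm_setIntegral_le_of_norm_le_const hK fun y hy => norm_mul_le_of_le (hk y hy) (hu y)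

theorem tendsto_integral_mul_of_weakStar_tendsto_zero {u : ℕ → α → ℂ} {k : α → ℂ} {K : Set α}
    (hK : MeasurableSet K) (hsupp : ∀ n, support (u n) ⊆ K)
    (hweak : ∀ g, Integrable g μ → Tendsto (fun n => ∫ y, u n y * g y ∂μ) atTop (𝓝 0))
    (hk : IntegrableOn k K μ) :
    Tendsto (fun n => ∫ y, k y * u n y ∂μ) atTop (𝓝 0) := by
  refine (hweak _ (hk.integrable_indicator hK)).congr fun n => integral_congr_ae <|
    ae_of_all _ fun y => ?_
  by_cases hy : y ∈ K
  · rw [indicator_of_mem hy, mul_comm]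
  · simp [indicator_of_notMem hy, notMem_support.mp (mt (hsupp n ·) hy)]

theorem tendsto_setIntegral_norm_rpow_of_bounded {F : ℕ → α → ℂ} {V : Set α} {B p : ℝ}
    (hV : MeasurableSet V) (hVfin : μ V < ∞)
    (hF : ∀ n, AEStronglyMeasurable (F n) (μ.restrict V)) (hB : ∀ n, ∀ x ∈ V, ‖F n x‖ ≤ B)
    (hlim : ∀ x ∈ V, Tendsto (F · x) atTop (𝓝 0)) (hp : 0 < p) :
    Tendsto (fun n => ∫ x in V, ‖F n x‖ ^ p ∂μ) atTop (𝓝 0) := by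
  have hpow : Continuous fun t : ℝ => t ^ p := Real.continuous_rpow_const hp.le
  have := tendsto_integral_of_dominated_convergence (μ := μ.restrict V) (fun _ => B ^ p)
    (fun n => hpow.comp_aestronglyMeasurable (hF n).norm)
    (integrableOn_const hVfin.ne)
    (fun n => (ae_restrict_iff' hV).2 <| ae_of_all _ fun x hx => by
      rw [Real.norm_of_nonneg (by positivity)]
      exact Real.rpow_le_rpow (norm_nonneg _) (hB n x hx) hp.le)
    ((ae_restrict_iff' hV).2 <| ae_of_all _ fun x hx => by
      simpa [comp_def, Real.zero_rpow hp.ne'] using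
        (hpow.tendsto 0).comp (tendsto_zero_iff_norm_tendsto_zero.1 (hlim x hx)))
  simpa using this

end MeasureSpace

section Kernel

variable {X : Type*} [TopologicalSpace X] [T2Space X] [MeasurableSpace X] [BorelSpace X]
  {μ : Measure X} [IsFiniteMeasureOnCompacts μ]

theorem integrable_mul_of_continuous_of_bounded {g u : X → ℂ} {K : Set X} {M : ℝ}
    (hK : IsCompact K) (hg : Continuous g) (hu : AEStronglyMeasurable u μ)
    (hM : ∀ y, ‖u y‖ ≤ M) (hsupp : support u ⊆ K) :
    Integrable (fun y => g y * u y) μ :=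
  (integrableOn_iff_integrable_of_support_subset ((support_mul_subset_right _ _).trans hsupp)).1 <|
    (Measure.integrableOn_of_bounded hK.measure_lt_top.ne hu (ae_of_all _ hM)).continuousOn_mul
      hg.continuousOn hK

theorem tendsto_setIntegral_norm_integral_kernel_rpow [SecondCountableTopology X] [SFinite μ]
    {κ : X → X → ℂ} (hκ : Continuous (uncurry κ)) {K V : Set X} (hK : IsCompact K)
    (hV : MeasurableSet V) (hVc : IsCompact (closure V)) {u : ℕ → X → ℂ} {M : ℝ}
    (hu : ∀ n, Measurable (u n)) (hM : ∀ n y, ‖u n y‖ ≤ M) (hsupp : ∀ n, support (u n) ⊆ K)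
    (hweak : ∀ g, Integrable g μ → Tendsto (fun n => ∫ y, u n y * g y ∂μ) atTop (𝓝 0))
    {p : ℝ} (hp : 0 < p) :
    Tendsto (fun n => ∫ x in V, ‖∫ y, κ x y * u n y ∂μ‖ ^ p ∂μ) atTop (𝓝 0) := by
  obtain ⟨C, hC⟩ := (hVc.prod hK).exists_bound_of_continuousOn hκ.continuousOn
  refine tendsto_setIntegral_norm_rpow_of_bounded hV
    ((measure_mono subset_closure).trans_lt hVc.measure_lt_top) (fun n => ?_)
    (fun n x hx => norm_integral_mul_le_of_support_subset hK.measure_lt_top (hsupp n)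
      (fun y hy => hC (x, y) ⟨subset_closure hx, hy⟩) (hM n))
    (fun x _ => tendsto_integral_mul_of_weakStar_tendsto_zero hK.measurableSet hsupp hweak
      ((hκ.comp (Continuous.prodMk_right x)).continuousOn.integrableOn_compact hK)) hp
  exact (hκ.measurable.mul ((hu n).comp measurable_snd)).stronglyMeasurable
    |>.integral_prod_right' |>.aestronglyMeasurable

end Kernel

theorem stmt6_general
    {d : ℕ} (a b : EuclideanSpace ℝ (Fin d) → ℂ)
    (ha : Continuous a) (hasupp : HasCompactSupport a)
    (hb : Continuous b)
    (ψ : EuclideanSpace ℝ (Fin d) → ℂ) (hψ : ψ = 𝓕⁻ a)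
    (A : (EuclideanSpace ℝ (Fin d) → ℂ) → EuclideanSpace ℝ (Fin d) → ℂ)
    (hA : ∀ u x, A u x = ∫ y, ψ (x - y) * u y)
    (K : Set (EuclideanSpace ℝ (Fin d))) (hK : IsCompact K) :
    (∀ (u : EuclideanSpace ℝ (Fin d) → ℂ), Measurable u →
      (∃ M, ∀ x, ‖u x‖ ≤ M) → Function.support u ⊆ K →
      ∀ x, A (fun y => b y * u y) x - b x * A u x
        = ∫ y, (b y - b x) * ψ (x - y) * u y) ∧
    (∀ (u : ℕ → EuclideanSpace ℝ (Fin d) → ℂ) (M : ℝ),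
      (∀ n, Measurable (u n)) → (∀ n x, ‖u n x‖ ≤ M) →
      (∀ n, Function.support (u n) ⊆ K) →
      (∀ g : EuclideanSpace ℝ (Fin d) → ℂ, Integrable g →
        Tendsto (fun n => ∫ y, u n y * g y) atTop (nhds 0)) →
      ∀ (V : Set (EuclideanSpace ℝ (Fin d))), IsOpen V → IsCompact (closure V) →
      ∀ p₀ : ℝ, 1 ≤ p₀ →
        Tendsto (fun n => ∫ x in V,
            ‖A (fun y => b y * u n y) x - b x * A (u n) x‖ ^ p₀)
          atTop (nhds 0)) := by
  have hψc : Continuous ψ :=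
    hψ ▸ continuous_fourierInv_of_integrable (ha.integrable_of_hasCompactSupport hasupp)
  have commutator_eq : ∀ (u : EuclideanSpace ℝ (Fin d) → ℂ), Measurable u →
      (∃ M, ∀ x, ‖u x‖ ≤ M) → Function.support u ⊆ K →
      ∀ x, A (fun y => b y * u y) x - b x * A u x
        = ∫ y, (b y - b x) * ψ (x - y) * u y := by
    rintro u hu ⟨M, hM⟩ hsupp x
    have hψx : Continuous fun y => ψ (x - y) := by fun_prop
    rw [hA, hA]
    refine integral_mul_sub_mul_integral (b x) ?_
      (integrable_mul_of_continuous_of_bounded hK hψx hu.aestronglyMeasurable hM hsupp)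
    simpa only [mul_assoc] using integrable_mul_of_continuous_of_bounded (μ := volume)
      (g := fun y => ψ (x - y) * b y) hK (hψx.mul hb) hu.aestronglyMeasurable hM hsupp
  refine ⟨commutator_eq, fun u M hu hM hsupp hweak V hV hVc p₀ hp₀ => ?_⟩
  simp_rw [commutator_eq (u _) (hu _) ⟨M, hM _⟩ (hsupp _)]
  exact tendsto_setIntegral_norm_integral_kernel_rpow (μ := volume)
    (κ := fun x y => (b y - b x) * ψ (x - y))
    (by fun_prop) hK hV.measurableSet hVc hu hM hsupp hweak (by linarith)

/-- For `a` continuous with compact support, `ψ = 𝓕⁻ a`,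
`b ∈ C₀`, `A u = ψ ⋆ u` and `B u = b u`, the commutator `C = AB − BA` is
`(C u)(x) = ∫ (b y − b x) ψ(x−y) u y dy`, and `C` is compact from `L∞`
functions supported in a fixed compact `K` into `L^{p₀}(V)` for every
relatively compact `V` and `p₀ ≥ 1` (sequential form). -/
theorem stmt6
    {d : ℕ} (a b : EuclideanSpace ℝ (Fin d) → ℂ)
    (ha : Continuous a) (hasupp : HasCompactSupport a)
    (hb : Continuous b) (hbsupp : HasCompactSupport b)
    (ψ : EuclideanSpace ℝ (Fin d) → ℂ) (hψ : ψ = 𝓕⁻ a)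
    (A : (EuclideanSpace ℝ (Fin d) → ℂ) → EuclideanSpace ℝ (Fin d) → ℂ)
    (hA : ∀ u x, A u x = ∫ y, ψ (x - y) * u y)
    (K : Set (EuclideanSpace ℝ (Fin d))) (hK : IsCompact K) :
    (∀ (u : EuclideanSpace ℝ (Fin d) → ℂ), Measurable u →
      (∃ M, ∀ x, ‖u x‖ ≤ M) → Function.support u ⊆ K →
      ∀ x, A (fun y => b y * u y) x - b x * A u x
        = ∫ y, (b y - b x) * ψ (x - y) * u y) ∧
    (∀ (u : ℕ → EuclideanSpace ℝ (Fin d) → ℂ) (M : ℝ),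
      (∀ n, Measurable (u n)) → (∀ n x, ‖u n x‖ ≤ M) →
      (∀ n, Function.support (u n) ⊆ K) →
      (∀ g : EuclideanSpace ℝ (Fin d) → ℂ, Integrable g →
        Tendsto (fun n => ∫ y, u n y * g y) atTop (nhds 0)) →
      ∀ (V : Set (EuclideanSpace ℝ (Fin d))), IsOpen V → IsCompact (closure V) →
      ∀ p₀ : ℝ, 1 ≤ p₀ →
        Tendsto (fun n => ∫ x in V,
            ‖A (fun y => b y * u n y) x - b x * A (u n) x‖ ^ p₀)
          atTop (nhds 0)) :=
  stmt6_general a b ha hasupp hb ψ hψ A hA K hK
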